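/- Let $I_0$ be a rectangle in $\mathbb{R}^n$, $\mu$ an absolutely continuous finite Borel measure on $I_0$, $f \in L^1(\mu)$ nonnegative, and $A$ a constant with $\frac{1}{\mu(I_0)}\int_{I_0} f\,d\mu \le A$. Then the set $\{x \in I_0 : f(x) > A\}$ is, up to a $\mu$-null set, contained in a countable union of pairwise disjoint rectangles $I_j$ over each of which the $\mu$-average of $f$ equals exactly $A$, so that $\mu(\{x : f(x) > A\}) \le \sum_j \mu(I_j) = \frac{1}{A}\sum_j \int_{I_j} f\,d\mu \le \frac{1}{A}\int_{I_0} f\,d\mu$ when $A > 0$. -/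

import Mathlib

open MeasureTheory Set

/-- An axis-parallel rectangle `∏ᵢ [aᵢ, bᵢ)` in `ℝⁿ`. -/
def rect {n : ℕ} (a b : Fin n → ℝ) : Set (Fin n → ℝ) :=
  Set.pi Set.univ fun i => Set.Ico (a i) (b i)

open Filter Topology Function
open scoped ENNReal

/-!
Cut `I₀` in two along the coordinates in turn, refining only *live* rectangles `R`, those with
`∫_R (f - A) ≤ 0`. As `μ ≪ volume`, the integral over `{y ∈ R | y k < t}` is continuous in `t`,
and the intermediate value theorem yields a cut of `R` each of whose pieces either has
`∫ (f - A) = 0`, and is kept as a *chosen* rectangle, or is live and at most half as wide as `R`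
in the direction cut. So a point of `{f > A}` in no chosen rectangle lies in live rectangles
shrinking to it. Let `E` be the set of such points and `U ⊇ E` open: the live rectangles of one
generation inside `U` are disjoint with `∫ (f - A) ≤ 0`, and `f - A ≥ -A` on `U \ E`, so in the
limit `∫_E (f - A) ≤ A μ(U \ E)`. Outer regularity makes the right side small, hence `μ E = 0`.
The weak-type bound is then `∑ μ(I_j) = A⁻¹ ∑ ∫_{I_j} f ≤ A⁻¹ ∫_{I₀} f`.
-/

namespace MeasureTheory

variable {X : Type*} [MeasurableSpace X] {μ : Measure X} {f g : X → ℝ} {A : ℝ}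

theorem integral_biUnion {ι : Type*} {s : Set ι} {t : ι → Set X} (hs : s.Countable)
    (hm : ∀ i ∈ s, MeasurableSet (t i)) (hd : s.PairwiseDisjoint t)
    (hg : IntegrableOn g (⋃ i ∈ s, t i) μ) :
    ∫ x in ⋃ i ∈ s, t i, g x ∂μ = ∑' i : s, ∫ x in t i, g x ∂μ := by
  have := hs.to_subtype
  rw [biUnion_eq_iUnion] at hg ⊢
  exact integral_iUnion (fun i => hm i i.2) (fun i j hij => hd i.2 j.2 (Subtype.coe_ne_coe.2 hij))
    hg

theorem tendsto_setIntegral_inter_of_eventually_mem (hg : Integrable g μ) {s : Set X}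
    (hs : MeasurableSet s) {t : ℕ → Set X} (ht : ∀ k, MeasurableSet (t k))
    (hst : ∀ x ∈ s, ∀ᶠ k in atTop, x ∈ t k) :
    Tendsto (fun k => ∫ x in s ∩ t k, g x ∂μ) atTop (𝓝 (∫ x in s, g x ∂μ)) := by
  simp_rw [← setIntegral_indicator (ht _)]
  refine tendsto_integral_filter_of_dominated_convergence (fun x => ‖g x‖)
    (Eventually.of_forall fun k => (hg.indicator (ht k)).aestronglyMeasurable.restrict)
    (Eventually.of_forall fun k => Eventually.of_forall fun x => norm_indicator_le_norm_self _ _)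
    hg.norm.integrableOn ?_
  refine (ae_restrict_iff' hs).2 (Eventually.of_forall fun x hx => ?_)
  refine tendsto_const_nhds.congr' ?_
  filter_upwards [hst x hx] with k hk
  rw [indicator_of_mem hk]

theorem setIntegral_sub_const_eq_mul_setAverage_sub {s : Set X} (hs : μ s ≠ ∞)
    (hf : IntegrableOn f s μ) (A : ℝ) :
    ∫ x in s, (f x - A) ∂μ = μ.real s * (⨍ x in s, f x ∂μ - A) := by
  have : IsFiniteMeasure (μ.restrict s) := isFiniteMeasure_restrict.2 hs
  rw [integral_sub hf (integrable_const A), setIntegral_const, ← measure_smul_setAverage f hs,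
    smul_eq_mul, smul_eq_mul, mul_sub]

theorem setIntegral_inter_biUnion_sub_le [IsFiniteMeasure μ] (hf : Integrable f μ)
    (hf0 : ∀ x, 0 ≤ f x) (hA : 0 ≤ A) {ι : Type*} {s : Set ι} (hs : s.Countable)
    {P : ι → Set X} (hPm : ∀ i ∈ s, MeasurableSet (P i)) (hPd : s.PairwiseDisjoint P)
    (hPint : ∀ i ∈ s, ∫ x in P i, (f x - A) ∂μ ≤ 0) {E U : Set X} (hE : MeasurableSet E)
    (hPU : ∀ i ∈ s, P i ⊆ U) :
    ∫ x in E ∩ ⋃ i ∈ s, P i, (f x - A) ∂μ ≤ A * μ.real (U \ E) := by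
  have hg : Integrable (fun x => f x - A) μ := hf.sub (integrable_const A)
  have hT : ∫ x in ⋃ i ∈ s, P i, (f x - A) ∂μ ≤ 0 := by
    rw [integral_biUnion hs hPm hPd hg.integrableOn]
    exact tsum_nonpos fun i => hPint i i.2
  have hTE : -(A * μ.real ((⋃ i ∈ s, P i) \ E)) ≤
      ∫ x in (⋃ i ∈ s, P i) \ E, (f x - A) ∂μ := by
    rw [integral_sub hf.integrableOn (integrable_const A).integrableOn, setIntegral_const,
      smul_eq_mul, mul_comm]
    linarith [integral_nonneg (μ := μ.restrict ((⋃ i ∈ s, P i) \ E)) (f := f) fun x => hf0 x]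
  have hTU : μ.real ((⋃ i ∈ s, P i) \ E) ≤ μ.real (U \ E) :=
    measureReal_mono (sdiff_subset_sdiff_left (iUnion₂_subset hPU))
  have hsplit := integral_inter_add_sdiff hE (hg.integrableOn (s := ⋃ i ∈ s, P i))
  rw [inter_comm] at hsplit
  linarith [mul_le_mul_of_nonneg_left hTU hA]

theorem measure_eq_zero_of_cells [TopologicalSpace X] [IsFiniteMeasure μ] [μ.OuterRegular]
    (hf : Integrable f μ) (hf0 : ∀ x, 0 ≤ f x) (hA : 0 ≤ A) {ι : Type*} [Countable ι]
    (P : ι → Set X) (stage : ι → ℕ) (hPm : ∀ i, MeasurableSet (P i))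
    (hPint : ∀ i, ∫ x in P i, (f x - A) ∂μ ≤ 0)
    (hPd : ∀ k, {i | stage i = k}.PairwiseDisjoint P) {E : Set X} (hE : NullMeasurableSet E μ)
    (hfE : ∀ x ∈ E, A < f x)
    (hEP : ∀ x ∈ E, ∀ U ∈ 𝓝 x,
      ∀ᶠ k in atTop, ∃ i, stage i = k ∧ x ∈ P i ∧ P i ⊆ U) :
    μ E = 0 := by
  obtain ⟨E', hE'E, hE'm, hE'⟩ := hE.exists_measurable_subset_ae_eq
  rw [← measure_congr hE']
  have hopen : ∀ U, IsOpen U → E' ⊆ U →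
      ∫ x in E', (f x - A) ∂μ ≤ A * μ.real (U \ E') := by
    intro U hU hE'U
    refine le_of_tendsto' (tendsto_setIntegral_inter_of_eventually_mem
      (hf.sub (integrable_const A)) hE'm
      (fun k => MeasurableSet.biUnion (to_countable _) fun i _ => hPm i) fun x hx => ?_)
      fun k => setIntegral_inter_biUnion_sub_le hf hf0 hA
        (to_countable {i | stage i = k ∧ P i ⊆ U}) (fun i _ => hPm i)
        ((hPd k).subset fun i hi => hi.1) (fun i _ => hPint i) hE'm fun i hi => hi.2
    filter_upwards [hEP x (hE'E hx) U (hU.mem_nhds (hE'U hx))] with k ⟨i, hik, hxi, hiU⟩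
    exact mem_biUnion (x := i) ⟨hik, hiU⟩ hxi
  have hnonpos : ∫ x in E', (f x - A) ∂μ ≤ 0 := by
    refine le_of_forall_pos_le_add fun ε hε => ?_
    obtain ⟨U, hE'U, hU, -, hUε⟩ := hE'm.exists_isOpen_sdiff_lt (measure_ne_top μ E')
      (ENNReal.ofReal_pos.2 (div_pos hε (by linarith : 0 < A + 1))).ne'
    have hUε' := ENNReal.toReal_lt_of_lt_ofReal hUε
    rw [← measureReal_def, lt_div_iff₀ (by linarith)] at hUε'
    linarith [hopen U hU hE'U, measureReal_nonneg (μ := μ) (s := U \ E')]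
  have hpos : ∀ x ∈ E', 0 < f x - A := fun x hx => sub_pos.2 (hfE x (hE'E hx))
  by_contra hE'0
  refine hnonpos.not_gt ((setIntegral_pos_iff_support_of_nonneg_ae
    ((ae_restrict_iff' hE'm).2 (Eventually.of_forall fun x hx => (hpos x hx).le))
    (hf.sub (integrable_const A)).integrableOn).2 ?_)
  have hsupp : (support fun x => f x - A) ∩ E' = E' :=
    inter_eq_right.2 fun x hx => (hpos x hx).ne'
  rwa [hsupp, pos_iff_ne_zero]

theorem setOf_gt_eq_empty_of_subsingleton [Subsingleton X] [IsFiniteMeasure μ] {I : Set X}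
    (hI : μ I ≠ 0) (hA : ⨍ x in I, f x ∂μ ≤ A) : {x ∈ I | f x > A} = ∅ := by
  refine eq_empty_of_forall_notMem fun x hx => hx.2.not_ge ?_
  rwa [show f = fun _ => f x from funext fun y => congrArg f (Subsingleton.elim y x),
    setAverage_const hI (measure_ne_top μ I)] at hA

theorem measure_le_of_setAverage_eq [IsFiniteMeasure μ] {ι : Type*} {S : Set ι}
    (hS : S.Countable) {t : ι → Set X} (htm : ∀ i ∈ S, MeasurableSet (t i))
    (hd : S.PairwiseDisjoint t) {I E : Set X} (htI : ∀ i ∈ S, t i ⊆ I)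
    (havg : ∀ i ∈ S, ⨍ x in t i, f x ∂μ = A) (hE : μ (E \ ⋃ i ∈ S, t i) = 0)
    (hf : IntegrableOn f I μ) (hf0 : ∀ x, 0 ≤ f x) (hA : 0 < A) :
    μ E ≤ ENNReal.ofReal ((1 / A) * ∫ x in I, f x ∂μ) := by
  have hTI : ⋃ i ∈ S, t i ⊆ I := iUnion₂_subset htI
  have hfT : IntegrableOn f (⋃ i ∈ S, t i) μ := hf.mono_set hTI
  have hT : ∫ x in ⋃ i ∈ S, t i, (f x - A) ∂μ = 0 := by
    rw [integral_biUnion hS htm hd (g := fun x => f x - A)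
      (hfT.sub (integrableOn_const (measure_ne_top μ _)))]
    refine (tsum_congr fun i => ?_).trans tsum_zero
    rw [setIntegral_sub_const_eq_mul_setAverage_sub (measure_ne_top μ _)
      (hf.mono_set (htI i i.2)), havg i i.2, sub_self, mul_zero]
  rw [integral_sub hfT (integrable_const A), setIntegral_const, smul_eq_mul, sub_eq_zero] at hT
  calc μ E ≤ μ (⋃ i ∈ S, t i) := measure_mono_ae (ae_le_set.2 hE)
    _ = ENNReal.ofReal ((1 / A) * ∫ x in ⋃ i ∈ S, t i, f x ∂μ) := by
      rw [hT, ← ofReal_measureReal (measure_ne_top μ _)]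
      field_simp
    _ ≤ ENNReal.ofReal ((1 / A) * ∫ x in I, f x ∂μ) :=
      ENNReal.ofReal_le_ofReal (mul_le_mul_of_nonneg_left
        (setIntegral_mono_set hf (ae_of_all _ hf0) hTI.eventuallyLE) (by positivity))

end MeasureTheory

theorem exists_injOn_image_eq {ι : Type*} [Encodable ι] [Inhabited ι] (S : Set ι) :
    ∃ (e : ℕ → ι) (N : Set ℕ), InjOn e N ∧ e '' N = S := by
  refine ⟨fun j => (Encodable.decode j).getD default, Encodable.encode '' S, ?_, ?_⟩
  · rintro _ ⟨i, -, rfl⟩ _ ⟨i', -, rfl⟩ h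
    simp only [Encodable.encodek, Option.getD_some] at h
    rw [h]
  · simp [image_image, Encodable.encodek]

theorem exists_cut_of_continuousOn {G : ℝ → ℝ} {a b : ℝ} (hab : a ≤ b)
    (hG : ContinuousOn G (Icc a b)) (ha : G a = 0) (hb : G b ≤ 0) :
    ∃ s ∈ Icc a b, (G s = 0 ∨ G s ≤ 0 ∧ s - a ≤ (b - a) / 2) ∧
      (G b - G s = 0 ∨ G b - G s ≤ 0 ∧ b - s ≤ (b - a) / 2) := by
  -- Cut at the midpoint `m` unless one half has positive integral; the intermediate value
  -- theorem then moves the cut into that half, so that the longer piece has integral zero.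
  set m := (a + b) / 2 with hm
  have ham : a ≤ m := by linarith
  have hmb : m ≤ b := by linarith
  by_cases hleft : 0 < G m
  · obtain ⟨s, hs, hGs⟩ := intermediate_value_Icc' hmb (hG.mono (Icc_subset_Icc ham le_rfl))
      ⟨hb, hleft.le⟩
    exact ⟨s, ⟨ham.trans hs.1, hs.2⟩, Or.inl hGs,
      Or.inr ⟨by linarith, by linarith [hs.1]⟩⟩
  by_cases hright : 0 < G b - G m
  · obtain ⟨s, hs, hGs⟩ := intermediate_value_Icc' ham (hG.mono (Icc_subset_Icc le_rfl hmb))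
      ⟨by linarith, ha ▸ hb⟩
    exact ⟨s, ⟨hs.1, hs.2.trans hmb⟩, Or.inr ⟨by linarith, by linarith [hs.2]⟩,
      Or.inl (by linarith)⟩
  exact ⟨m, ⟨ham, hmb⟩, Or.inr ⟨not_lt.1 hleft, by linarith⟩,
    Or.inr ⟨not_lt.1 hright, by linarith⟩⟩

section Rect

variable {n : ℕ}

theorem mem_rect {a b y : Fin n → ℝ} : y ∈ rect a b ↔ ∀ i, a i ≤ y i ∧ y i < b i := by
  simp [rect]

theorem measurableSet_rect (a b : Fin n → ℝ) : MeasurableSet (rect a b) :=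
  MeasurableSet.univ_pi fun _ => measurableSet_Ico

theorem mem_rect_update_right {a b y : Fin n → ℝ} {k : Fin n} {s : ℝ} (hs : s ≤ b k) :
    y ∈ rect a (update b k s) ↔ y ∈ rect a b ∧ y k < s := by
  simp only [mem_rect]
  constructor
  · intro h
    have hk : y k < s := by simpa using (h k).2
    refine ⟨fun i => ⟨(h i).1, ?_⟩, hk⟩
    rcases eq_or_ne i k with rfl | hi
    · exact hk.trans_le hs
    · simpa [hi] using (h i).2
  · rintro ⟨h, hk⟩ i
    rcases eq_or_ne i k with rfl | hi
    · simpa using ⟨(h i).1, hk⟩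
    · simpa [hi] using h i

theorem mem_rect_update_left {a b y : Fin n → ℝ} {k : Fin n} {s : ℝ} (hs : a k ≤ s) :
    y ∈ rect (update a k s) b ↔ y ∈ rect a b ∧ s ≤ y k := by
  simp only [mem_rect]
  constructor
  · intro h
    have hk : s ≤ y k := by simpa using (h k).1
    refine ⟨fun i => ⟨?_, (h i).2⟩, hk⟩
    rcases eq_or_ne i k with rfl | hi
    · exact hs.trans hk
    · simpa [hi] using (h i).1
  · rintro ⟨h, hk⟩ i
    rcases eq_or_ne i k with rfl | hi
    · simpa using ⟨hk, (h i).2⟩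
    · simpa [hi] using h i

theorem rect_update_self_eq_empty (a b : Fin n → ℝ) (k : Fin n) :
    rect a (update b k (a k)) = ∅ :=
  eq_empty_of_forall_notMem fun y hy => by
    simpa using ((mem_rect.1 hy k).1.trans_lt (mem_rect.1 hy k).2)

end Rect

section Slab

variable {n : ℕ} {μ : Measure (Fin n → ℝ)} {g : (Fin n → ℝ) → ℝ}

theorem continuous_setIntegral_rect_update (hμ : μ ≪ volume) (hg : Integrable g μ)
    (a b : Fin n → ℝ) (k : Fin n) :
    Continuous fun t => ∫ y in rect a (update b k t), g y ∂μ := by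
  refine continuous_iff_continuousAt.2 fun t₀ => ?_
  simp_rw [ContinuousAt, ← integral_indicator (measurableSet_rect _ _)]
  refine tendsto_integral_filter_of_dominated_convergence (fun y => ‖g y‖)
    (Eventually.of_forall fun t => hg.aestronglyMeasurable.indicator (measurableSet_rect _ _))
    (Eventually.of_forall fun t => Eventually.of_forall fun y => norm_indicator_le_norm_self _ _)
    hg.norm ?_
  have hnull : μ {y | y k = t₀} = 0 :=
    hμ (by rw [volume_pi]; exact Measure.pi_hyperplane (fun _ => (volume : Measure ℝ)) k t₀)
  filter_upwards [measure_eq_zero_iff_ae_notMem.1 hnull] with y hy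
  have hmem : ∀ t, (y k < t ↔ y k < t₀) →
      (y ∈ rect a (update b k t) ↔ y ∈ rect a (update b k t₀)) := fun t ht => by
    simp only [mem_rect]
    exact forall_congr' fun i => by rcases eq_or_ne i k with rfl | hi <;> simp [*]
  have hev : ∀ᶠ t in 𝓝 t₀, (y k < t ↔ y k < t₀) := by
    rcases lt_or_gt_of_ne (show y k ≠ t₀ from hy) with h | h
    · filter_upwards [Ioi_mem_nhds h] with t ht using iff_of_true ht h
    · filter_upwards [Iio_mem_nhds h] with t ht using iff_of_false ht.not_gt h.not_gt
  refine tendsto_const_nhds.congr' ?_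
  filter_upwards [hev] with t ht
  by_cases hy₀ : y ∈ rect a (update b k t₀)
  · rw [indicator_of_mem hy₀, indicator_of_mem ((hmem t ht).2 hy₀)]
  · rw [indicator_of_notMem hy₀, indicator_of_notMem (mt (hmem t ht).1 hy₀)]

end Slab

namespace RisingSun

section Halve

variable {n : ℕ}

def halve (p : (Fin n → ℝ) × (Fin n → ℝ)) (k : Fin n) (s : ℝ) :
    Bool → (Fin n → ℝ) × (Fin n → ℝ)
  | false => (p.1, update p.2 k s)
  | true => (update p.1 k s, p.2)

variable {p : (Fin n → ℝ) × (Fin n → ℝ)} {k : Fin n} {s : ℝ}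

theorem rect_halve_false (hs : s ≤ p.2 k) :
    rect (halve p k s false).1 (halve p k s false).2 = rect p.1 p.2 ∩ {y | y k < s} :=
  ext fun _ => mem_rect_update_right hs

theorem rect_halve_true (hs : p.1 k ≤ s) :
    rect (halve p k s true).1 (halve p k s true).2 = rect p.1 p.2 ∩ {y | s ≤ y k} :=
  ext fun _ => mem_rect_update_left hs

theorem rect_halve_false_union_true (hs : s ∈ Icc (p.1 k) (p.2 k)) :
    rect (halve p k s false).1 (halve p k s false).2 ∪
      rect (halve p k s true).1 (halve p k s true).2 = rect p.1 p.2 := by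
  rw [rect_halve_false hs.2, rect_halve_true hs.1, ← inter_union_distrib_left]
  exact inter_eq_left.2 fun y _ => lt_or_ge (y k) s

theorem rect_halve_subset (hs : s ∈ Icc (p.1 k) (p.2 k)) (j : Bool) :
    rect (halve p k s j).1 (halve p k s j).2 ⊆ rect p.1 p.2 :=
  rect_halve_false_union_true hs ▸ by cases j <;> simp

theorem disjoint_rect_halve (hs : s ∈ Icc (p.1 k) (p.2 k)) :
    Disjoint (rect (halve p k s false).1 (halve p k s false).2)
      (rect (halve p k s true).1 (halve p k s true).2) := by
  rw [rect_halve_true hs.1, rect_halve_false hs.2]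
  exact disjoint_left.2 fun y hy hy' => (show y k < s from hy.2).not_ge (show s ≤ y k from hy'.2)

theorem halve_fst_le_snd (hp : p.1 ≤ p.2) (hs : s ∈ Icc (p.1 k) (p.2 k)) (j : Bool) :
    (halve p k s j).1 ≤ (halve p k s j).2 := by
  intro i
  rcases eq_or_ne i k with rfl | hi <;> cases j <;> simp [halve, *, hp i, hs.1, hs.2]

theorem halve_apply_of_ne {i : Fin n} (hi : i ≠ k) (j : Bool) :
    (halve p k s j).1 i = p.1 i ∧ (halve p k s j).2 i = p.2 i := by
  cases j <;> simp [halve, hi]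

end Halve

section Cut

variable {n : ℕ} (μ : Measure (Fin n → ℝ)) (g : (Fin n → ℝ) → ℝ)

def IsLiveChild (p q : (Fin n → ℝ) × (Fin n → ℝ)) (k : Fin n) : Prop :=
  ∫ y in rect q.1 q.2, g y ∂μ ≤ 0 ∧ q.2 k - q.1 k ≤ (p.2 k - p.1 k) / 2

def IsGoodCut (p : (Fin n → ℝ) × (Fin n → ℝ)) (k : Fin n) (s : ℝ) : Prop :=
  ∀ j, ∫ y in rect (halve p k s j).1 (halve p k s j).2, g y ∂μ = 0 ∨
    IsLiveChild μ g p (halve p k s j) k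

-- Only the cuts of live cells matter, and for those a good cut exists (`exists_isGoodCut`).
open Classical in
noncomputable def cut (p : (Fin n → ℝ) × (Fin n → ℝ)) (k : Fin n) : ℝ :=
  if h : ∃ s ∈ Icc (p.1 k) (p.2 k), IsGoodCut μ g p k s then h.choose else p.1 k

variable {μ g} {p : (Fin n → ℝ) × (Fin n → ℝ)} {k : Fin n}

theorem exists_isGoodCut (hμ : μ ≪ volume) (hg : Integrable g μ) (hp : p.1 k ≤ p.2 k)
    (hint : ∫ y in rect p.1 p.2, g y ∂μ ≤ 0) :
    ∃ s ∈ Icc (p.1 k) (p.2 k), IsGoodCut μ g p k s := by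
  set G : ℝ → ℝ := fun t => ∫ y in rect p.1 (update p.2 k t), g y ∂μ with hG
  have hGa : G (p.1 k) = 0 := by simp [hG, rect_update_self_eq_empty]
  have hGb : G (p.2 k) = ∫ y in rect p.1 p.2, g y ∂μ := by simp [hG]
  have hupper : ∀ s ∈ Icc (p.1 k) (p.2 k),
      ∫ y in rect (halve p k s true).1 (halve p k s true).2, g y ∂μ = G (p.2 k) - G s := by
    intro s hs
    rw [hGb, ← rect_halve_false_union_true hs, setIntegral_union (disjoint_rect_halve hs)
      (measurableSet_rect _ _) hg.integrableOn hg.integrableOn]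
    simp [halve, hG]
  obtain ⟨s, hs, hleft, hright⟩ := exists_cut_of_continuousOn hp
    (continuous_setIntegral_rect_update hμ hg _ _ k).continuousOn hGa (hGb.trans_le hint)
  refine ⟨s, hs, fun j => ?_⟩
  cases j
  · simpa [IsLiveChild, halve, hG] using hleft
  · have hwidth : (halve p k s true).2 k - (halve p k s true).1 k = p.2 k - s := by
      simp [halve]
    simpa only [IsLiveChild, hupper s hs, hwidth] using hright

theorem cut_mem_Icc (hp : p.1 k ≤ p.2 k) : cut μ g p k ∈ Icc (p.1 k) (p.2 k) := by
  unfold cut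
  split_ifs with h
  exacts [h.choose_spec.1, ⟨le_rfl, hp⟩]

theorem isGoodCut_cut (hμ : μ ≪ volume) (hg : Integrable g μ) (hp : p.1 k ≤ p.2 k)
    (hint : ∫ y in rect p.1 p.2, g y ∂μ ≤ 0) : IsGoodCut μ g p k (cut μ g p k) := by
  have h := exists_isGoodCut hμ hg hp hint
  rw [cut, dif_pos h]
  exact h.choose_spec.2

end Cut

section Tree

variable {n : ℕ} [NeZero n] (μ : Measure (Fin n → ℝ)) (g : (Fin n → ℝ) → ℝ)
  (a₀ b₀ : Fin n → ℝ)

noncomputable def node : List Bool → (Fin n → ℝ) × (Fin n → ℝ)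
  | [] => (a₀, b₀)
  | j :: l => halve (node l) (Fin.ofNat n l.length) (cut μ g (node l) (Fin.ofNat n l.length)) j

def cell (l : List Bool) : Set (Fin n → ℝ) :=
  rect (node μ g a₀ b₀ l).1 (node μ g a₀ b₀ l).2

def IsLive : List Bool → Prop
  | [] => True
  | j :: l => IsLive l ∧ IsLiveChild μ g (node μ g a₀ b₀ l) (node μ g a₀ b₀ (j :: l))
        (Fin.ofNat n l.length)

def IsChosen : List Bool → Prop
  | [] => False
  | j :: l => IsLive μ g a₀ b₀ l ∧
      ¬ IsLiveChild μ g (node μ g a₀ b₀ l) (node μ g a₀ b₀ (j :: l))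
        (Fin.ofNat n l.length)

variable {μ g a₀ b₀}

theorem node_fst_le_snd (hab : a₀ ≤ b₀) :
    ∀ l, (node μ g a₀ b₀ l).1 ≤ (node μ g a₀ b₀ l).2
  | [] => hab
  | j :: l => halve_fst_le_snd (node_fst_le_snd hab l) (cut_mem_Icc (node_fst_le_snd hab l _)) j

theorem cell_cons_subset (hab : a₀ ≤ b₀) (j : Bool) (l : List Bool) :
    cell μ g a₀ b₀ (j :: l) ⊆ cell μ g a₀ b₀ l :=
  rect_halve_subset (cut_mem_Icc (node_fst_le_snd hab l _)) j

theorem exists_mem_cell_cons (hab : a₀ ≤ b₀) {l : List Bool} {y : Fin n → ℝ}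
    (hy : y ∈ cell μ g a₀ b₀ l) : ∃ j, y ∈ cell μ g a₀ b₀ (j :: l) := by
  rw [cell, ← rect_halve_false_union_true (cut_mem_Icc (node_fst_le_snd hab l _))] at hy
  exact hy.elim (⟨false, ·⟩) (⟨true, ·⟩)

theorem disjoint_cell_cons (hab : a₀ ≤ b₀) {j j' : Bool} (hj : j ≠ j') (l : List Bool) :
    Disjoint (cell μ g a₀ b₀ (j :: l)) (cell μ g a₀ b₀ (j' :: l)) := by
  have h := disjoint_rect_halve (cut_mem_Icc (μ := μ) (g := g)
    (node_fst_le_snd (μ := μ) (g := g) hab l (Fin.ofNat n l.length)))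
  cases j <;> cases j' <;> first | exact absurd rfl hj | exact h | exact h.symm

theorem cell_subset_of_suffix (hab : a₀ ≤ b₀) {l : List Bool} :
    ∀ {l'}, l <:+ l' → cell μ g a₀ b₀ l' ⊆ cell μ g a₀ b₀ l
  | [], h => by rw [List.suffix_nil.1 h]
  | j :: l', h => by
    rcases List.suffix_cons_iff.1 h with rfl | h
    · rfl
    · exact (cell_cons_subset hab j l').trans (cell_subset_of_suffix hab h)

theorem eq_of_mem_cell (hab : a₀ ≤ b₀) {y : Fin n → ℝ} :
    ∀ {l l' : List Bool}, y ∈ cell μ g a₀ b₀ l → y ∈ cell μ g a₀ b₀ l' →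
      l.length = l'.length → l = l'
  | [], [], _, _, _ => rfl
  | j :: l, j' :: l', hy, hy', hlen => by
    obtain rfl := eq_of_mem_cell hab (cell_cons_subset hab j l hy)
      (cell_cons_subset hab j' l' hy') (by simpa using hlen)
    by_contra hne
    exact disjoint_left.1 (disjoint_cell_cons hab (fun h => hne (by rw [h])) l) hy hy'

theorem suffix_of_mem_cell (hab : a₀ ≤ b₀) {y : Fin n → ℝ} {l l' : List Bool}
    (hy : y ∈ cell μ g a₀ b₀ l) (hy' : y ∈ cell μ g a₀ b₀ l') (hlen : l.length ≤ l'.length) :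
    l <:+ l' := by
  have hsuffix := l'.drop_suffix (l'.length - l.length)
  rwa [eq_of_mem_cell hab hy (cell_subset_of_suffix hab hsuffix hy') (by simp; omega)]

theorem exists_mem_cell (hab : a₀ ≤ b₀) {y : Fin n → ℝ} (hy : y ∈ rect a₀ b₀) :
    ∀ m, ∃ l : List Bool, l.length = m ∧ y ∈ cell μ g a₀ b₀ l
  | 0 => ⟨[], rfl, hy⟩
  | m + 1 => by
    obtain ⟨l, rfl, hyl⟩ := exists_mem_cell hab hy m
    obtain ⟨j, hj⟩ := exists_mem_cell_cons hab hyl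
    exact ⟨j :: l, rfl, hj⟩

theorem IsLive.of_suffix {l : List Bool} :
    ∀ {l'}, l <:+ l' → IsLive μ g a₀ b₀ l' → IsLive μ g a₀ b₀ l
  | [], h, _ => by rw [List.suffix_nil.1 h]; trivial
  | _ :: _, h, hl' => by
    rcases List.suffix_cons_iff.1 h with rfl | h
    exacts [hl', hl'.1.of_suffix h]

theorem IsLive.setIntegral_nonpos (hroot : ∫ y in rect a₀ b₀, g y ∂μ ≤ 0) :
    ∀ {l}, IsLive μ g a₀ b₀ l → ∫ y in cell μ g a₀ b₀ l, g y ∂μ ≤ 0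
  | [], _ => hroot
  | _ :: _, h => h.2.1

theorem IsChosen.setIntegral_eq_zero (hμ : μ ≪ volume) (hg : Integrable g μ)
    (hab : a₀ ≤ b₀) (hroot : ∫ y in rect a₀ b₀, g y ∂μ ≤ 0) :
    ∀ {l}, IsChosen μ g a₀ b₀ l → ∫ y in cell μ g a₀ b₀ l, g y ∂μ = 0
  | j :: l, ⟨hl, hj⟩ =>
    (isGoodCut_cut hμ hg (node_fst_le_snd hab l _) (hl.setIntegral_nonpos hroot) j).resolve_right
      hj

theorem IsChosen.not_isLive : ∀ {l}, IsChosen μ g a₀ b₀ l → ¬ IsLive μ g a₀ b₀ l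
  | _ :: _, h, h' => h.2 h'.2

theorem IsChosen.isLive_of_suffix {l l' : List Bool} (h : IsChosen μ g a₀ b₀ l')
    (hl : l <:+ l') (hne : l ≠ l') : IsLive μ g a₀ b₀ l := by
  obtain _ | ⟨j, l'⟩ := l'
  · exact h.elim
  · exact h.1.of_suffix ((List.suffix_cons_iff.1 hl).resolve_left hne)

theorem pairwiseDisjoint_isChosen (hab : a₀ ≤ b₀) :
    {l | IsChosen μ g a₀ b₀ l}.PairwiseDisjoint (cell μ g a₀ b₀) := by
  have key : ∀ {l l'}, IsChosen μ g a₀ b₀ l → IsChosen μ g a₀ b₀ l' → l ≠ l' →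
      l.length ≤ l'.length → ∀ y ∈ cell μ g a₀ b₀ l, y ∉ cell μ g a₀ b₀ l' :=
    fun hl hl' hne hlen y hy hy' =>
    hl.not_isLive (hl'.isLive_of_suffix (suffix_of_mem_cell hab hy hy' hlen) hne)
  intro l hl l' hl' hne
  refine disjoint_left.2 fun y hy hy' => ?_
  rcases le_total l.length l'.length with hlen | hlen
  exacts [key hl hl' hne hlen y hy hy', key hl' hl hne.symm hlen y hy' hy]

theorem isLive_of_forall_isChosen_notMem (hab : a₀ ≤ b₀) {y : Fin n → ℝ}
    (hy : ∀ l, IsChosen μ g a₀ b₀ l → y ∉ cell μ g a₀ b₀ l) :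
    ∀ l, y ∈ cell μ g a₀ b₀ l → IsLive μ g a₀ b₀ l
  | [], _ => trivial
  | j :: l, hyl => by
    have hl := isLive_of_forall_isChosen_notMem hab hy l (cell_cons_subset hab j l hyl)
    by_contra hj
    exact hy (j :: l) ⟨hl, fun h => hj ⟨hl, h⟩⟩ hyl

theorem IsLive.width_le (hab : a₀ ≤ b₀) :
    ∀ {l}, IsLive μ g a₀ b₀ l → ∀ i,
      (node μ g a₀ b₀ l).2 i - (node μ g a₀ b₀ l).1 i ≤
        (b₀ i - a₀ i) / 2 ^ Nat.count (· ≡ (i : ℕ) [MOD n]) l.length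
  | [], _, i => by simp [node]
  | j :: l, ⟨hl, hchild⟩, i => by
    have ih := hl.width_le hab i
    have hk : Fin.ofNat n l.length = i ↔ l.length ≡ i [MOD n] := by
      rw [Fin.ext_iff, Fin.val_ofNat, Nat.ModEq, Nat.mod_eq_of_lt i.isLt]
    rw [List.length_cons, Nat.count_succ]
    split_ifs with hi
    · rw [← hk] at hi
      subst hi
      rw [pow_succ, ← div_div]
      linarith [hchild.2]
    · obtain ⟨h1, h2⟩ := halve_apply_of_ne (p := node μ g a₀ b₀ l)
        (s := cut μ g (node μ g a₀ b₀ l) (Fin.ofNat n l.length)) (fun h => hi (hk.1 h.symm)) j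
      rw [add_zero]
      simpa only [node, h1, h2] using ih

theorem eventually_cell_subset (hab : a₀ ≤ b₀) {x : Fin n → ℝ}
    {U : Set (Fin n → ℝ)} (hU : U ∈ 𝓝 x) :
    ∀ᶠ m in atTop, ∀ l, IsLive μ g a₀ b₀ l → l.length = m → x ∈ cell μ g a₀ b₀ l →
      cell μ g a₀ b₀ l ⊆ U := by
  obtain ⟨δ, hδ, hball⟩ := Metric.mem_nhds_iff.1 hU
  have hsmall : ∀ᶠ m in atTop, ∀ i, (b₀ i - a₀ i) / 2 ^ (m / n) < δ := by
    refine eventually_all.2 fun i => ?_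
    have : Tendsto (fun m : ℕ => (b₀ i - a₀ i) / 2 ^ (m / n)) atTop (𝓝 0) :=
      tendsto_const_nhds.div_atTop ((tendsto_pow_atTop_atTop_of_one_lt one_lt_two).comp
        (Nat.tendsto_div_const_atTop (NeZero.ne n)))
    exact this.eventually (gt_mem_nhds hδ)
  filter_upwards [hsmall] with m hm l hl hlen hx z hz
  refine hball ((dist_pi_lt_iff hδ).2 fun i => ?_)
  have hcount : (b₀ i - a₀ i) / 2 ^ Nat.count (· ≡ (i : ℕ) [MOD n]) l.length ≤
      (b₀ i - a₀ i) / 2 ^ (m / n) := by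
    refine div_le_div_of_nonneg_left (sub_nonneg.2 (hab i)) (by positivity)
      (pow_le_pow_right₀ one_le_two ?_)
    rw [Nat.count_modEq_card _ (NeZero.pos n), hlen]
    exact Nat.le_add_right _ _
  have hw := hl.width_le hab i
  have hxi := mem_rect.1 hx i
  have hzi := mem_rect.1 hz i
  rw [Real.dist_eq, abs_lt]
  constructor <;> linarith [hm i]

end Tree

section Cover

variable {n : ℕ} [NeZero n] {μ : Measure (Fin n → ℝ)} [IsFiniteMeasure μ]
  {f : (Fin n → ℝ) → ℝ} {A : ℝ} {a₀ b₀ : Fin n → ℝ}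

theorem measure_diff_iUnion_isChosen_eq_zero (hf : Integrable f μ)
    (hf0 : ∀ x, 0 ≤ f x) (hA : 0 ≤ A) (hab : a₀ ≤ b₀)
    (hroot : ∫ x in rect a₀ b₀, (f x - A) ∂μ ≤ 0) :
    μ ({x ∈ rect a₀ b₀ | A < f x} \ ⋃ l ∈ {l | IsChosen μ (f · - A) a₀ b₀ l},
      cell μ (f · - A) a₀ b₀ l) = 0 := by
  refine measure_eq_zero_of_cells hf hf0 hA
    (fun l : {l // IsLive μ (f · - A) a₀ b₀ l} => cell μ (f · - A) a₀ b₀ l.1)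
    (fun l => l.1.length) (fun _ => measurableSet_rect _ _)
    (fun l => l.2.setIntegral_nonpos hroot) ?_ ?_ (fun x hx => hx.1.2) ?_
  · intro m l hl l' hl' hne
    exact disjoint_left.2 fun y hy hy' =>
      hne (Subtype.ext (eq_of_mem_cell hab hy hy' (hl.trans hl'.symm)))
  · exact ((measurableSet_rect _ _).nullMeasurableSet.inter
      (nullMeasurableSet_lt aemeasurable_const hf.aemeasurable)).diff
      (MeasurableSet.biUnion (to_countable _) fun _ _ => measurableSet_rect _ _).nullMeasurableSet
  · intro x hx U hU
    have hlive := isLive_of_forall_isChosen_notMem hab fun l hl hxl => hx.2 (mem_biUnion hl hxl)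
    filter_upwards [eventually_cell_subset hab hU] with m hm
    obtain ⟨l, hlen, hxl⟩ := exists_mem_cell hab hx.1.1 m
    exact ⟨⟨l, hlive l hxl⟩, hlen, hxl, hm l (hlive l hxl) hlen hxl⟩

theorem exists_rising_sun_cells (hμ : μ ≪ volume) (hf : Integrable f μ)
    (hf0 : ∀ x, 0 ≤ f x) (hA₀ : 0 ≤ A) (hab : a₀ ≤ b₀)
    (hA : ⨍ x in rect a₀ b₀, f x ∂μ ≤ A) :
    ∃ (S : Set (List Bool)) (c d : List Bool → Fin n → ℝ),
      (∀ l ∈ S, rect (c l) (d l) ⊆ rect a₀ b₀) ∧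
      (S.PairwiseDisjoint fun l => rect (c l) (d l)) ∧
      (∀ l ∈ S, ⨍ x in rect (c l) (d l), f x ∂μ = A) ∧
      μ ({x ∈ rect a₀ b₀ | f x > A} \ ⋃ l ∈ S, rect (c l) (d l)) = 0 := by
  have hroot : ∫ x in rect a₀ b₀, (f x - A) ∂μ ≤ 0 := by
    rw [setIntegral_sub_const_eq_mul_setAverage_sub (measure_ne_top μ _) hf.integrableOn]
    exact mul_nonpos_of_nonneg_of_nonpos measureReal_nonneg (sub_nonpos.2 hA)
  -- `⨍` over a null set is `0`, so the null chosen cells are dropped; they only cover a null set.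
  refine ⟨{l | IsChosen μ (f · - A) a₀ b₀ l ∧ μ (cell μ (f · - A) a₀ b₀ l) ≠ 0},
    fun l => (node μ (f · - A) a₀ b₀ l).1, fun l => (node μ (f · - A) a₀ b₀ l).2,
    fun l _ => cell_subset_of_suffix hab List.nil_suffix,
    (pairwiseDisjoint_isChosen hab).subset fun l hl => hl.1, fun l hl => ?_, ?_⟩
  · have h0 : ∫ x in cell μ (f · - A) a₀ b₀ l, (f x - A) ∂μ = 0 :=
      hl.1.setIntegral_eq_zero hμ (hf.sub (integrable_const A)) hab hroot
    rw [setIntegral_sub_const_eq_mul_setAverage_sub (measure_ne_top μ _) hf.integrableOn] at h0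
    exact sub_eq_zero.1 ((mul_eq_zero.1 h0).resolve_left
      ((measureReal_ne_zero_iff (measure_ne_top μ _)).2 hl.2))
  refine measure_mono_null (fun x ⟨hxE, hxS⟩ => ?_) (measure_union_null
    (measure_diff_iUnion_isChosen_eq_zero hf hf0 hA₀ hab hroot)
    ((measure_biUnion_null_iff (to_countable {l | IsChosen μ (f · - A) a₀ b₀ l ∧
      μ (cell μ (f · - A) a₀ b₀ l) = 0})).2 fun l hl => hl.2))
  by_cases hx : x ∈ ⋃ l ∈ {l | IsChosen μ (f · - A) a₀ b₀ l}, cell μ (f · - A) a₀ b₀ l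
  · obtain ⟨l, hl, hxl⟩ := mem_iUnion₂.1 hx
    exact Or.inr (mem_biUnion ⟨hl, not_not.1 fun h => hxS (mem_biUnion ⟨hl, h⟩ hxl)⟩ hxl)
  · exact Or.inl ⟨hxE, hx⟩

end Cover

end RisingSun

/-- Weak-type `(1,1)` estimate from the multidimensional rising sun lemma: for
nonnegative `f ∈ L¹(μ)` with `μ`-mean over the rectangle `I₀` at most `A > 0`,
the set `{f > A}` is covered mod `μ`-null sets by countably many pairwise
disjoint subrectangles with `μ`-mean of `f` exactly `A`, whence
`μ({x ∈ I₀ : f x > A}) ≤ (1/A) ∫_{I₀} f dμ`. -/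
theorem rising_sun_weak_type_estimate {n : ℕ}
    (μ : Measure (Fin n → ℝ)) [IsFiniteMeasure μ] (hμ : μ ≪ volume)
    (a₀ b₀ : Fin n → ℝ) (hI₀ : ∀ i, a₀ i < b₀ i) (hμI₀ : μ (rect a₀ b₀) ≠ 0)
    (f : (Fin n → ℝ) → ℝ) (hf_nonneg : ∀ x, 0 ≤ f x) (hf : Integrable f μ)
    (A : ℝ) (hApos : 0 < A) (hA : ⨍ x in rect a₀ b₀, f x ∂μ ≤ A) :
    ∃ (c d : ℕ → Fin n → ℝ) (N : Set ℕ),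
      (∀ j ∈ N, rect (c j) (d j) ⊆ rect a₀ b₀) ∧
      (N.PairwiseDisjoint fun j => rect (c j) (d j)) ∧
      (∀ j ∈ N, ⨍ x in rect (c j) (d j), f x ∂μ = A) ∧
      μ ({x ∈ rect a₀ b₀ | f x > A} \ ⋃ j ∈ N, rect (c j) (d j)) = 0 ∧
      μ {x ∈ rect a₀ b₀ | f x > A} ≤
        ENNReal.ofReal ((1 / A) * ∫ x in rect a₀ b₀, f x ∂μ) := by
  rcases Nat.eq_zero_or_pos n with rfl | hn
  · have hempty := setOf_gt_eq_empty_of_subsingleton hμI₀ hA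
    exact ⟨fun _ => a₀, fun _ => b₀, ∅, by simp, by simp, by simp, by simp [hempty],
      by simp [hempty]⟩
  have : NeZero n := ⟨hn.ne'⟩
  obtain ⟨S, c, d, hsub, hdisj, havg, hnull⟩ :=
    RisingSun.exists_rising_sun_cells hμ hf hf_nonneg hApos.le (fun i => (hI₀ i).le) hA
  obtain ⟨e, N, he, rfl⟩ := exists_injOn_image_eq S
  rw [biUnion_image] at hnull
  refine ⟨c ∘ e, d ∘ e, N, fun j hj => hsub _ (mem_image_of_mem e hj),
    he.pairwiseDisjoint_image.1 hdisj, fun j hj => havg _ (mem_image_of_mem e hj), hnull, ?_⟩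
  exact measure_le_of_setAverage_eq (N.to_countable.image e)
    (fun _ _ => measurableSet_rect _ _) hdisj hsub havg (by rwa [biUnion_image])
    hf.integrableOn hf_nonneg hApos
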